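/- arXiv:2510.05551 — 5 statements merged into one kernel-verified Lean document; each statement's English description precedes it below -/
import Mathlib

section
/- For every u, v ∈ ℝ and ω ∈ [-1,1], the value Λ₂(u,v,ω) lies in the Fréchet interval [max(Λ(u)+Λ(v)-1, 0), min(Λ(u), Λ(v))]. -/
open Real

noncomputable def AMH (u v w : ℝ) : ℝ :=
  (1 + Real.exp (-u) + Real.exp (-v) + (1 - w) * Real.exp (-u - v))⁻¹

noncomputable def Lg (t : ℝ) : ℝ := (1 + Real.exp (-t))⁻¹

noncomputable def LgInv (p : ℝ) : ℝ := Real.log (p / (1 - p))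

theorem amh_frechet_interval (u v : ℝ) (w : ℝ) (hw : w ∈ Set.Icc (-1 : ℝ) 1) :
    AMH u v w ∈ Set.Icc (max (Lg u + Lg v - 1) 0) (min (Lg u) (Lg v)) := by
  obtain ⟨hw1, hw2⟩ := hw
  have hab : Real.exp (-u - v) = Real.exp (-u) * Real.exp (-v) := by
    rw [← Real.exp_add]; ring_nf
  set a := Real.exp (-u) with ha
  set b := Real.exp (-v) with hb
  have hap : 0 < a := Real.exp_pos _
  have hbp : 0 < b := Real.exp_pos _
  have hA : AMH u v w = (1 + a + b + (1 - w) * (a * b))⁻¹ := by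
    rw [AMH, hab]
  have habp : 0 < a * b := mul_pos hap hbp
  have h1w : 0 ≤ 1 - w := by linarith
  have hD : 0 < 1 + a + b + (1 - w) * (a * b) := by nlinarith [mul_nonneg h1w habp.le]
  have h1a : 0 < 1 + a := by linarith
  have h1b : 0 < 1 + b := by linarith
  have hLu : Lg u = (1 + a)⁻¹ := rfl
  have hLv : Lg v = (1 + b)⁻¹ := rfl
  refine ⟨max_le ?_ ?_, le_min ?_ ?_⟩
  · rw [hA, hLu, hLv]
    have key : (1 + a + b + (1 - w) * (a * b))⁻¹ - ((1 + a)⁻¹ + (1 + b)⁻¹ - 1)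
        = (a * b * (1 + a + b + w + (1 - w) * (a * b))) /
          ((1 + a + b + (1 - w) * (a * b)) * (1 + a) * (1 + b)) := by
      field_simp
      ring
    have hnum : 0 ≤ a * b * (1 + a + b + w + (1 - w) * (a * b)) := by
      apply mul_nonneg habp.le
      nlinarith [mul_nonneg h1w habp.le]
    have := div_nonneg hnum (by positivity :
      (0:ℝ) ≤ (1 + a + b + (1 - w) * (a * b)) * (1 + a) * (1 + b))
    linarith [key ▸ this]
  · rw [hA]; positivity
  · rw [hA, hLu]
    apply inv_anti₀ h1a
    nlinarith [mul_nonneg h1w habp.le]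
  · rw [hA, hLv]
    apply inv_anti₀ h1b
    nlinarith [mul_nonneg h1w habp.le]
end

section
/- Identification of the marginal logit from two instrument values: let ν₀ ≠ ν₁ be real numbers and p₀, p₁ ∈ (0,1). If λ ∈ ℝ and ω ∈ ℝ satisfy p_z = Λ₂(λ, ν_z, ω) for z = 0,1, then e^{λ} = (e^{ν₀} - e^{ν₁}) / (e^{ν₀}(1/p₀ - 1) - e^{ν₁}(1/p₁ - 1)), so λ is uniquely determined by (p₀, p₁, ν₀, ν₁). -/
open Real

/- Scaling the odds ratio `1 / Λ₂ - 1` by `e^v` leaves `v` only in the term `e^{v-u}`, which is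
why two instrument values pin down `e^{-u}`. -/
theorem exp_mul_one_div_AMH_sub_one (u v w : ℝ) :
    exp v * (1 / AMH u v w - 1) = exp (-u) * exp v + 1 + (1 - w) * exp (-u) := by
  have hv : exp (-v) * exp v = 1 := by rw [← exp_add, neg_add_cancel, exp_zero]
  have huv : exp (-u - v) * exp v = exp (-u) := by rw [← exp_add, sub_add_cancel]
  rw [AMH, one_div, inv_inv]
  linear_combination hv + (1 - w) * huv

theorem exp_mul_one_div_AMH_sub_one_sub (u v₀ v₁ w : ℝ) :
    exp v₀ * (1 / AMH u v₀ w - 1) - exp v₁ * (1 / AMH u v₁ w - 1) =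
      exp (-u) * (exp v₀ - exp v₁) := by
  rw [exp_mul_one_div_AMH_sub_one, exp_mul_one_div_AMH_sub_one]
  ring

theorem marginal_logit_identification_general
    (ν₀ ν₁ : ℝ) (hν : ν₀ ≠ ν₁)
    (p₀ p₁ : ℝ)
    (lam ω : ℝ)
    (h0 : p₀ = AMH lam ν₀ ω) (h1 : p₁ = AMH lam ν₁ ω) :
    Real.exp lam =
      (Real.exp ν₀ - Real.exp ν₁) /
        (Real.exp ν₀ * (1 / p₀ - 1) - Real.exp ν₁ * (1 / p₁ - 1)) := by
  have hdiff : exp ν₀ - exp ν₁ ≠ 0 := sub_ne_zero.mpr (exp_injective.ne hν)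
  rw [h0, h1, exp_mul_one_div_AMH_sub_one_sub, exp_neg]
  field_simp

theorem marginal_logit_identification
    (ν₀ ν₁ : ℝ) (hν : ν₀ ≠ ν₁)
    (p₀ p₁ : ℝ) (hp₀ : p₀ ∈ Set.Ioo (0 : ℝ) 1) (hp₁ : p₁ ∈ Set.Ioo (0 : ℝ) 1)
    (lam ω : ℝ)
    (h0 : p₀ = AMH lam ν₀ ω) (h1 : p₁ = AMH lam ν₁ ω) :
    Real.exp lam =
      (Real.exp ν₀ - Real.exp ν₁) /
        (Real.exp ν₀ * (1 / p₀ - 1) - Real.exp ν₁ * (1 / p₁ - 1)) :=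
  marginal_logit_identification_general ν₀ ν₁ hν p₀ p₁ lam ω h0 h1
end

section
/- Uniqueness of (λ, ω) given two equations: let ν₀ ≠ ν₁ and p₀, p₁ ∈ (0,1). If (λ, ω) and (λ', ω') in ℝ × [-1,1] both satisfy p_z = Λ₂(λ, ν_z, ω) = Λ₂(λ', ν_z, ω') for z = 0,1, then λ = λ' and ω = ω'. -/
open Real

theorem lambda_omega_uniqueness
    (ν₀ ν₁ : ℝ) (hν : ν₀ ≠ ν₁)
    (p₀ p₁ : ℝ) (hp₀ : p₀ ∈ Set.Ioo (0 : ℝ) 1) (hp₁ : p₁ ∈ Set.Ioo (0 : ℝ) 1)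
    (lam ω lam' ω' : ℝ)
    (hω : ω ∈ Set.Icc (-1 : ℝ) 1) (hω' : ω' ∈ Set.Icc (-1 : ℝ) 1)
    (h0 : p₀ = AMH lam ν₀ ω) (h1 : p₁ = AMH lam ν₁ ω)
    (h0' : p₀ = AMH lam' ν₀ ω') (h1' : p₁ = AMH lam' ν₁ ω') :
    lam = lam' ∧ ω = ω' := by
  have d0 : (1 + Real.exp (-lam) + Real.exp (-ν₀) + (1 - ω) * Real.exp (-lam - ν₀)) =
      (1 + Real.exp (-lam') + Real.exp (-ν₀) + (1 - ω') * Real.exp (-lam' - ν₀)) := by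
    have h := h0.symm.trans h0'
    unfold AMH at h
    exact inv_injective h
  have d1 : (1 + Real.exp (-lam) + Real.exp (-ν₁) + (1 - ω) * Real.exp (-lam - ν₁)) =
      (1 + Real.exp (-lam') + Real.exp (-ν₁) + (1 - ω') * Real.exp (-lam' - ν₁)) := by
    have h := h1.symm.trans h1'
    unfold AMH at h
    exact inv_injective h
  rw [show -lam - ν₀ = -lam + -ν₀ from by ring, show -lam' - ν₀ = -lam' + -ν₀ from by ring,
    Real.exp_add, Real.exp_add] at d0
  rw [show -lam - ν₁ = -lam + -ν₁ from by ring, show -lam' - ν₁ = -lam' + -ν₁ from by ring,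
    Real.exp_add, Real.exp_add] at d1
  set a := Real.exp (-lam) with ha_def
  set a' := Real.exp (-lam') with ha'_def
  set E0 := Real.exp (-ν₀) with hE0_def
  set E1 := Real.exp (-ν₁) with hE1_def
  have hE : E0 ≠ E1 := fun h => hν (neg_injective (Real.exp_injective h))
  have ha : a = a' := by
    have key : (a - a') * (E1 - E0) = 0 := by linear_combination E1 * d0 - E0 * d1
    rcases mul_eq_zero.mp key with h | h
    · linarith [sub_eq_zero.mp h]
    · exact absurd (sub_eq_zero.mp h).symm hE
  have hlam : lam = lam' := neg_injective (Real.exp_injective ha)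
  refine ⟨hlam, ?_⟩
  have haE0 : a * E0 ≠ 0 := by positivity
  have key2 : (ω' - ω) * (a * E0) = 0 := by linear_combination d0 - (1 + E0 - ω' * E0) * ha
  rcases mul_eq_zero.mp key2 with h | h
  · linarith [sub_eq_zero.mp h]
  · exact absurd h haE0
end

section
/- Recovering the simplex point from all one-vs-rest logits: let q ≥ 2, and suppose λ₁*, …, λ_{q-1}* ∈ ℝ are given. Define β = Σ_{k=1}^{q-1} e^{λ_k*}/(1+e^{λ_k*}) and assume β < 1. Set s = β/(1-β) and x_k = e^{λ_k*}(s+1)/(1+e^{λ_k*}) for k = 1,…,q-1, x_q = 1. Then for each k, x_k / (Σ_{j≠k} x_j) = e^{λ_k*}, i.e., the constructed positive weights reproduce the prescribed one-vs-rest odds. -/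
/-!
Since `s + 1 = (1 - β)⁻¹`, the first `q - 1` weights sum to `(s + 1) β = s`, so together with
`x_q = 1` all weights sum to `s + 1`. Removing `x_k = e^{λ_k} (s + 1) / (1 + e^{λ_k})` leaves
`(s + 1) / (1 + e^{λ_k})`, and the ratio of the two is `e^{λ_k}`.
-/

open Real Finset

theorem div_sum_erase_eq_of_eq_mul_div {K ι : Type*} [Field K] [Fintype ι] [DecidableEq ι]
    (x : ι → K) {T r : K} (hT : ∑ j, x j = T) (hT0 : T ≠ 0) (hr : 1 + r ≠ 0) {i : ι}
    (hi : x i = r * T / (1 + r)) :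
    x i / ∑ j ∈ univ.erase i, x j = r := by
  rw [sum_erase_eq_sub (mem_univ i), hT, hi]
  field_simp
  ring

theorem div_one_sub_add_one {K : Type*} [Field K] {β : K} (hβ : β ≠ 1) :
    β / (1 - β) + 1 = (1 - β)⁻¹ := by
  field_simp [sub_ne_zero.2 hβ.symm]
  ring

theorem recover_weights_from_logits_general (n : ℕ) (lam : Fin n → ℝ)
    (β : ℝ) (hβdef : β = ∑ k : Fin n, Real.exp (lam k) / (1 + Real.exp (lam k)))
    (hβ : β < 1)
    (s : ℝ) (hs : s = β / (1 - β))
    (x : Fin (n + 1) → ℝ)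
    (hx : ∀ k : Fin n,
      x k.castSucc = Real.exp (lam k) * (s + 1) / (1 + Real.exp (lam k)))
    (hxq : x (Fin.last n) = 1) :
    ∀ k : Fin n,
      x k.castSucc / (∑ j ∈ Finset.univ.erase k.castSucc, x j) = Real.exp (lam k) := by
  have hβ1 : 1 - β ≠ 0 := sub_ne_zero.2 hβ.ne'
  have hs1 : s + 1 = (1 - β)⁻¹ := hs ▸ div_one_sub_add_one hβ.ne
  have hfirst : ∑ k : Fin n, x k.castSucc = (s + 1) * β := by
    rw [hβdef, mul_sum]
    exact sum_congr rfl fun k _ => by rw [hx k]; ring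
  have htotal : ∑ j, x j = s + 1 := by
    rw [Fin.sum_univ_castSucc, hfirst, hxq, hs1]
    field_simp
    ring
  intro k
  exact div_sum_erase_eq_of_eq_mul_div x htotal (hs1 ▸ inv_ne_zero hβ1) (by positivity) (hx k)

theorem recover_weights_from_logits (n : ℕ) (hn : 1 ≤ n) (lam : Fin n → ℝ)
    (β : ℝ) (hβdef : β = ∑ k : Fin n, Real.exp (lam k) / (1 + Real.exp (lam k)))
    (hβ : β < 1)
    (s : ℝ) (hs : s = β / (1 - β))
    (x : Fin (n + 1) → ℝ)
    (hx : ∀ k : Fin n,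
      x k.castSucc = Real.exp (lam k) * (s + 1) / (1 + Real.exp (lam k)))
    (hxq : x (Fin.last n) = 1) :
    ∀ k : Fin n,
      x k.castSucc / (∑ j ∈ Finset.univ.erase k.castSucc, x j) = Real.exp (lam k) :=
  recover_weights_from_logits_general n lam β hβdef hβ s hs x hx hxq
end

section
/- Uniqueness in the one-vs-rest system: let q ≥ 2 and λ₁*, …, λ_{q-1}* ∈ ℝ. There is at most one vector (x₁,…,x_{q-1}) of positive reals such that, with x_q = 1, log(x_k/Σ_{j≠k} x_j) = λ_k* for every k = 1,…,q-1. -/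
open Real Finset

theorem one_vs_rest_uniqueness (n : ℕ) (hn : 1 ≤ n) (lam : Fin n → ℝ)
    (x x' : Fin n → ℝ) (hx : ∀ k, 0 < x k) (hx' : ∀ k, 0 < x' k)
    (h : ∀ k : Fin n,
      Real.log (x k / ((∑ j : Fin n, x j) + 1 - x k)) = lam k)
    (h' : ∀ k : Fin n,
      Real.log (x' k / ((∑ j : Fin n, x' j) + 1 - x' k)) = lam k) :
    x = x' := by
  set s := ∑ j : Fin n, x j with hs
  set s' := ∑ j : Fin n, x' j with hs'
  have hxle : ∀ k, x k ≤ s := fun k =>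
    Finset.single_le_sum (fun i _ => (hx i).le) (Finset.mem_univ k)
  have hx'le : ∀ k, x' k ≤ s' := fun k =>
    Finset.single_le_sum (fun i _ => (hx' i).le) (Finset.mem_univ k)
  have hd : ∀ k, 0 < s + 1 - x k := fun k => by linarith [hxle k]
  have hd' : ∀ k, 0 < s' + 1 - x' k := fun k => by linarith [hx'le k]
  have key : ∀ k, x k * (s' + 1) = x' k * (s + 1) := by
    intro k
    have h1 : Real.log (x k / (s + 1 - x k)) = Real.log (x' k / (s' + 1 - x' k)) :=
      (h k).trans (h' k).symm
    have hpos : x k / (s + 1 - x k) ∈ Set.Ioi (0:ℝ) :=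
      Set.mem_Ioi.mpr (div_pos (hx k) (hd k))
    have hpos' : x' k / (s' + 1 - x' k) ∈ Set.Ioi (0:ℝ) :=
      Set.mem_Ioi.mpr (div_pos (hx' k) (hd' k))
    have heq := Real.log_injOn_pos hpos hpos' h1
    rw [div_eq_div_iff (ne_of_gt (hd k)) (ne_of_gt (hd' k))] at heq
    nlinarith [heq]
  have hsum : s * (s' + 1) = s' * (s + 1) := by
    have hsc : ∑ k : Fin n, x k * (s' + 1) = ∑ k : Fin n, x' k * (s + 1) :=
      Finset.sum_congr rfl (fun k _ => key k)
    rw [← Finset.sum_mul, ← Finset.sum_mul] at hsc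
    exact hsc
  have hss : s = s' := by nlinarith [hsum]
  have hs1 : (0:ℝ) < s + 1 := by
    have := (hx ⟨0, hn⟩)
    linarith [hxle ⟨0, hn⟩]
  funext k
  have := key k
  rw [← hss] at this
  exact mul_right_cancel₀ (ne_of_gt hs1) this
end
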